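/- arXiv:1812.02219 — 2 statements merged into one kernel-verified Lean document; each statement's English description precedes it below -/
import Mathlib

section
/- For all positive integers n and m, r_{n,m} ⪯ r_{n+1,m} and r_{n,m} ⪯ r_{n,m+1}. -/
open Classical

/-- A slope is an element of `ℚ ∪ {∞}`; `none` denotes `∞`. -/
abbrev Slope := Option ℚ

/-- The clue of `f` along the line of slope `s` (vertical line `x = c` when `s = ∞ = none`,
and the line `y = r·x + c` when `s = some r`), with respect to the grid
`I_{n,m} = {1,…,n} × {1,…,m} ⊆ ℤ²`: the sum of `f` over the grid points lying on the line. -/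
noncomputable def clueSum (n m : ℕ) (s : Slope) (c : ℝ) (f : ℤ × ℤ → ℝ) : ℝ :=
  ∑ p ∈ (Finset.Icc (1 : ℤ) n ×ˢ Finset.Icc (1 : ℤ) m).filter
      (fun p => match s with
        | none => (p.1 : ℝ) = c
        | some r => (p.2 : ℝ) = (r : ℝ) * (p.1 : ℝ) + c),
    f p

/-- `f` and `g` are `T`-clue-equivalent on `I_{n,m}`: for every slope `s ∈ T` and every line
of slope `s`, the clues of `f` and `g` along that line agree. -/
def ClueEquiv (n m : ℕ) (T : Set Slope) (f g : ℤ × ℤ → ℝ) : Prop :=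
  ∀ s ∈ T, ∀ c : ℝ, clueSum n m s c f = clueSum n m s c g

/-- The entry `p ∈ I_{n,m}` is uniquely solvable with respect to the slope set `T`. -/
def UniqSolv (n m : ℕ) (T : Set Slope) (p : ℤ × ℤ) : Prop :=
  ∀ f g : ℤ × ℤ → ℝ, ClueEquiv n m T f g → f p = g p

/-- The enumeration `σ` of the slope set `S = ℤ ∪ {1/k : k ≠ 0} ∪ {∞}` realizing the order
`0 ≺ ∞ ≺ −1 ≺ 1 ≺ −1/2 ≺ −2 ≺ 1/2 ≺ 2 ≺ −1/3 ≺ −3 ≺ 1/3 ≺ 3 ≺ ⋯`: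
`σ 0 = 0`, `σ 1 = ∞`, `σ 2 = −1`, `σ 3 = 1`, and for `q ≥ 2`,
`σ (4q−4) = −1/q`, `σ (4q−3) = −q`, `σ (4q−2) = 1/q`, `σ (4q−1) = q`. -/
def sigmaSlope : ℕ → Slope
  | 0 => some 0
  | 1 => none
  | 2 => some (-1)
  | 3 => some 1
  | (a + 4) =>
    let q : ℚ := ((a / 4 + 2 : ℕ) : ℚ)
    match a % 4 with
    | 0 => some (-(1 / q))
    | 1 => some (-q)
    | 2 => some (1 / q)
    | _ => some q

/-- `C_{σ(a)} = {t ∈ S : t ⪯ σ(a)}`, the set of the first `a + 1` slopes. -/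
def CSet (a : ℕ) : Set Slope := sigmaSlope '' Set.Iic a

/-- Either every entry of the first row or every entry of the last row of `I_{n,m}` is
uniquely solvable with respect to `C_{σ(a)}`. -/
def RowOK (n m a : ℕ) : Prop :=
  (∀ i : ℤ, 1 ≤ i → i ≤ (n : ℤ) → UniqSolv n m (CSet a) (i, 1)) ∨
  (∀ i : ℤ, 1 ≤ i → i ≤ (n : ℤ) → UniqSolv n m (CSet a) (i, (m : ℤ)))

/-- Either every entry of the first column or every entry of the last column of `I_{n,m}` is
uniquely solvable with respect to `C_{σ(a)}`. -/
def ColOK (n m a : ℕ) : Prop :=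
  (∀ j : ℤ, 1 ≤ j → j ≤ (m : ℤ) → UniqSolv n m (CSet a) (1, j)) ∨
  (∀ j : ℤ, 1 ≤ j → j ≤ (m : ℤ) → UniqSolv n m (CSet a) ((n : ℤ), j))

/-- The index (in the enumeration `σ`) of the invariant `r_{n,m}`: the ⪯-least `s ∈ S` such
that either the first or the last row of `I_{n,m}` is uniquely solvable w.r.t. `C_s`. -/
noncomputable def rInv (n m : ℕ) : ℕ := sInf {a | RowOK n m a}

/-- The index of the invariant `c_{n,m}`: the ⪯-least `s ∈ S` such that either the first or
the last column of `I_{n,m}` is uniquely solvable w.r.t. `C_s`. -/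
noncomputable def cInv (n m : ℕ) : ℕ := sInf {a | ColOK n m a}

/-- The index of the invariant `s_{n,m} = min{r_{n,m}, c_{n,m}}`. -/
noncomputable def sInv (n m : ℕ) : ℕ := min (rInv n m) (cInv n m)

/-- The index of the invariant `k_{n,m}`: the ⪯-least `s ∈ S` such that every entry of
`I_{n,m}` is uniquely solvable w.r.t. `C_s`. -/
noncomputable def kInv (n m : ℕ) : ℕ :=
  sInf {a | ∀ p : ℤ × ℤ, 1 ≤ p.1 → p.1 ≤ (n : ℤ) → 1 ≤ p.2 → p.2 ≤ (m : ℤ) →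
    UniqSolv n m (CSet a) p}

/-- The index of the invariant `b_{n,m}`: the ⪯-least `s ∈ S` such that every entry of the
border `B_{n,m} = ({1,n} × I_m) ∪ (I_n × {1,m})` is uniquely solvable w.r.t. `C_s`. -/
noncomputable def bInv (n m : ℕ) : ℕ :=
  sInf {a | ∀ p : ℤ × ℤ, 1 ≤ p.1 → p.1 ≤ (n : ℤ) → 1 ≤ p.2 → p.2 ≤ (m : ℤ) →
    (p.1 = 1 ∨ p.1 = (n : ℤ) ∨ p.2 = 1 ∨ p.2 = (m : ℤ)) →
    UniqSolv n m (CSet a) p}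

/-!
Both inequalities come from embedding `I_{n,m}` into the larger grid by a translation (the
identity, or a shift by one row to carry the last row of `I_{n,m}` onto the last row of
`I_{n,m+1}`). Extending a function by zero and translating it turns each clue on the larger
grid into a clue on `I_{n,m}` along a line of the same slope, so two `C_s`-clue-equivalent
functions on `I_{n,m}` become clue-equivalent on the larger grid, and unique solvability of a row
there passes back to `I_{n,m}`. The minimum defining `r_{n+1,m}` or `r_{n,m+1}` exists because an
integer slope of size at least `m` meets the grid in single points.
-/

noncomputable def grid (n m : ℕ) : Finset (ℤ × ℤ) :=
  Finset.Icc 1 (n : ℤ) ×ˢ Finset.Icc 1 (m : ℤ)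

@[simp]
lemma mem_grid {n m : ℕ} {p : ℤ × ℤ} :
    p ∈ grid n m ↔ (1 ≤ p.1 ∧ p.1 ≤ n) ∧ (1 ≤ p.2 ∧ p.2 ≤ m) := by
  simp [grid]

def OnLine (s : Slope) (c : ℝ) (p : ℤ × ℤ) : Prop :=
  match s with
  | none => (p.1 : ℝ) = c
  | some r => (p.2 : ℝ) = r * p.1 + c

lemma clueSum_eq_sum_grid (n m : ℕ) (s : Slope) (c : ℝ) (f : ℤ × ℤ → ℝ) :
    clueSum n m s c f = ∑ p ∈ grid n m, if OnLine s c p then f p else 0 :=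
  Finset.sum_filter _ _

lemma exists_onLine_add_iff (s : Slope) (c : ℝ) (v : ℤ × ℤ) :
    ∃ c', ∀ q, OnLine s c (q + v) ↔ OnLine s c' q := by
  cases s with
  | none =>
    refine ⟨c - v.1, fun q => ?_⟩
    simp only [OnLine, Prod.fst_add, Int.cast_add]
    constructor <;> intro <;> linarith
  | some r =>
    refine ⟨c + r * v.1 - v.2, fun q => ?_⟩
    simp only [OnLine, Prod.fst_add, Prod.snd_add, Int.cast_add]
    constructor <;> intro <;> linarith

noncomputable def gridTranslate (n m : ℕ) (v : ℤ × ℤ) (f : ℤ × ℤ → ℝ)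
    (p : ℤ × ℤ) : ℝ :=
  if p - v ∈ grid n m then f (p - v) else 0

lemma exists_clueSum_gridTranslate {n m n' m' : ℕ} {v : ℤ × ℤ}
    (hv : ∀ q ∈ grid n m, q + v ∈ grid n' m') (s : Slope) (c : ℝ) :
    ∃ c', ∀ f, clueSum n' m' s c (gridTranslate n m v f) = clueSum n m s c' f := by
  obtain ⟨c', hc'⟩ := exists_onLine_add_iff s c v
  refine ⟨c', fun f => ?_⟩
  rw [clueSum_eq_sum_grid, clueSum_eq_sum_grid]
  symm
  refine Finset.sum_of_injOn (· + v) (add_left_injective v).injOn hv ?_ ?_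
  · intro p _ hp
    have hpv : p - v ∉ grid n m := fun h => hp ⟨p - v, h, sub_add_cancel p v⟩
    simp [gridTranslate, hpv]
  · intro q hq
    simp [gridTranslate, hq, hc']

lemma UniqSolv.of_translate {n m n' m' : ℕ} {T : Set Slope} {p v : ℤ × ℤ}
    (hv : ∀ q ∈ grid n m, q + v ∈ grid n' m') (hp : p ∈ grid n m)
    (h : UniqSolv n' m' T (p + v)) : UniqSolv n m T p := by
  intro f g hfg
  have hpv := h (gridTranslate n m v f) (gridTranslate n m v g) fun s hs c => by
    obtain ⟨c', hc'⟩ := exists_clueSum_gridTranslate hv s c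
    rw [hc', hc', hfg s hs c']
  simpa [gridTranslate, hp] using hpv

lemma UniqSolv.of_le {n m n' m' : ℕ} {T : Set Slope} {p : ℤ × ℤ}
    (hn : n ≤ n') (hm : m ≤ m') (hp : p ∈ grid n m)
    (h : UniqSolv n' m' T p) : UniqSolv n m T p :=
  UniqSolv.of_translate (n' := n') (m' := m') (v := 0)
    (fun q hq => by simp only [mem_grid, add_zero] at hq ⊢; omega) hp (by simpa using h)

lemma clueSum_steep {n m : ℕ} {r : ℤ} (hr : (m : ℤ) ≤ r) {p : ℤ × ℤ}
    (hp : p ∈ grid n m) (f : ℤ × ℤ → ℝ) :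
    clueSum n m (some r) (p.2 - r * p.1) f = f p := by
  rw [clueSum_eq_sum_grid, Finset.sum_eq_single_of_mem p hp, if_pos (by simp [OnLine])]
  intro q hq hqp
  rw [if_neg]
  intro hline
  have hdy : q.2 - p.2 = r * (q.1 - p.1) := by
    simp only [OnLine, Rat.cast_intCast] at hline
    have : ((q.2 - p.2 : ℤ) : ℝ) = ((r * (q.1 - p.1) : ℤ) : ℝ) := by push_cast; linarith
    exact_mod_cast this
  simp only [mem_grid] at hp hq
  -- `|q.2 - p.2| < m ≤ r` rules out `q.1 ≠ p.1`
  have hdx : q.1 = p.1 := by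
    rcases lt_trichotomy q.1 p.1 with h | h | h
    · nlinarith
    · exact h
    · nlinarith
  exact hqp (Prod.ext hdx (by rw [hdx, sub_self, mul_zero] at hdy; omega))

lemma uniqSolv_of_steep {n m : ℕ} {T : Set Slope} {r : ℤ} (hr : (m : ℤ) ≤ r)
    (hT : some (r : ℚ) ∈ T) {p : ℤ × ℤ} (hp : p ∈ grid n m) : UniqSolv n m T p := by
  intro f g hfg
  rw [← clueSum_steep hr hp f, ← clueSum_steep hr hp g]
  exact hfg _ hT _

lemma sigmaSlope_four_mul_add_seven (k : ℕ) :
    sigmaSlope (4 * k + 7) = some ((k + 2 : ℤ) : ℚ) := by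
  rw [show 4 * k + 7 = (4 * k + 3) + 4 by ring, sigmaSlope,
    show (4 * k + 3) % 4 = 3 by omega, show (4 * k + 3) / 4 = k by omega]
  push_cast
  rfl

lemma rowOK_four_mul_add_seven (n : ℕ) {m : ℕ} (hm : 0 < m) : RowOK n m (4 * m + 7) :=
  Or.inl fun i hi hin =>
    uniqSolv_of_steep (r := m + 2) (by omega)
      (sigmaSlope_four_mul_add_seven m ▸ Set.mem_image_of_mem _ Set.self_mem_Iic)
      (mem_grid.2 ⟨⟨hi, hin⟩, le_rfl, by omega⟩)

lemma RowOK.of_succ_left {n m a : ℕ} (hm : 0 < m) (h : RowOK (n + 1) m a) : RowOK n m a := by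
  refine h.imp (fun h i hi hin => ?_) (fun h i hi hin => ?_) <;>
  · exact UniqSolv.of_le n.le_succ le_rfl (mem_grid.2 ⟨⟨hi, hin⟩, by omega⟩)
      (h i hi (by omega))

lemma RowOK.of_succ_right {n m a : ℕ} (hm : 0 < m) (h : RowOK n (m + 1) a) : RowOK n m a := by
  refine h.imp (fun h i hi hin => ?_) (fun h i hi hin => ?_)
  · exact UniqSolv.of_le le_rfl m.le_succ (mem_grid.2 ⟨⟨hi, hin⟩, le_rfl, by omega⟩)
      (h i hi hin)
  · refine UniqSolv.of_translate (n' := n) (m' := m + 1) (v := (0, 1))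
      (fun q hq => by simp only [mem_grid, Prod.fst_add, Prod.snd_add] at hq ⊢; omega)
      (mem_grid.2 ⟨⟨hi, hin⟩, by omega, le_rfl⟩) ?_
    simpa using h i hi hin

theorem rInv_mono_general (n m : ℕ) (hm : 0 < m) :
    rInv n m ≤ rInv (n + 1) m ∧ rInv n m ≤ rInv n (m + 1) :=
  ⟨csInf_le_csInf (OrderBot.bddBelow _) ⟨_, rowOK_four_mul_add_seven (n + 1) hm⟩
      fun _ => RowOK.of_succ_left hm,
    csInf_le_csInf (OrderBot.bddBelow _) ⟨_, rowOK_four_mul_add_seven n m.succ_pos⟩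
      fun _ => RowOK.of_succ_right hm⟩

/-- `r_{n,m} ⪯ r_{n+1,m}` and `r_{n,m} ⪯ r_{n,m+1}` (comparison in the order
`⪯` is comparison of indices in the enumeration `σ`). -/
theorem rInv_mono (n m : ℕ) (hn : 0 < n) (hm : 0 < m) :
    rInv n m ≤ rInv (n + 1) m ∧ rInv n m ≤ rInv n (m + 1) :=
  rInv_mono_general n m hm
end

section
/- Let n and q be positive integers and let T be a set of slopes with −1/q ∈ T. Let ω = (w_1, …, w_m) be a sequence of non-negative integers with m ≤ n and ω(1,m) ≤ n, and suppose: (1) there is a positive integer m₀ ≤ m such that w_1 ≥ w_2 ≥ ⋯ ≥ w_{m₀} and w_i ∈ {0,1} for all m₀ < i ≤ m; (2) every entry of J_ω is uniquely solvable with respect to T on I_{n,n}. Let 1 ≤ j ≤ m₀+1 be such that the point (ω(j,m)+1, j) lies in I_{n,n}. If w_j + 1 ≤ q (where w_{m₀+1} is taken as the actual entry when m₀ < m and as 0 when m₀ = m) and, in the case j ≥ 2, also q ≤ w_{j−1} − 1, then the entry (ω(j,m)+1, j) is uniquely solvable with respect to T on I_{n,n}. -/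
/-!
The line `x + q y = x₀ + q j` of slope `-1/q` through `p = (x₀, j)`, `x₀ = ω(j,m) + 1`, meets row
`j - k` at `x₀ + q k` and row `j + t` at `x₀ - q t`. For `i < j` every `w_i ≥ q + 1`, so going
to row `j - k` the staircase widens by more than `q k`; for `i ≥ j` we have `w_j < q` and
`w_i ≤ q`, so going to row `j + t` it narrows by less than `q t`. Hence every other grid point of this line lies in `J_ω`, and the clue along the
line pins down `f p`.
-/

open Classical

/-- `ω(i,j) = ∑_{k=i}^{j} w_k` (equal to `0` when `i > j`). -/
def wSum (w : ℕ → ℕ) (i j : ℕ) : ℕ := ∑ k ∈ Finset.Icc i j, w k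

noncomputable def linePoints (n m : ℕ) (s : Slope) (c : ℝ) : Finset (ℤ × ℤ) :=
  (Finset.Icc (1 : ℤ) n ×ˢ Finset.Icc (1 : ℤ) m).filter
    (fun p => match s with
      | none => (p.1 : ℝ) = c
      | some r => (p.2 : ℝ) = (r : ℝ) * (p.1 : ℝ) + c)

theorem clueSum_eq_sum_linePoints (n m : ℕ) (s : Slope) (c : ℝ) (f : ℤ × ℤ → ℝ) :
    clueSum n m s c f = ∑ p ∈ linePoints n m s c, f p :=
  rfl

theorem UniqSolv.of_linePoints {n m : ℕ} {T : Set Slope} {s : Slope} {c : ℝ} {p : ℤ × ℤ}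
    (hs : s ∈ T) (hp : p ∈ linePoints n m s c)
    (hother : ∀ p' ∈ linePoints n m s c, p' ≠ p → UniqSolv n m T p') :
    UniqSolv n m T p := by
  intro f g hfg
  have hclue := hfg s hs c
  rw [clueSum_eq_sum_linePoints, clueSum_eq_sum_linePoints,
    ← Finset.add_sum_erase _ f hp, ← Finset.add_sum_erase _ g hp] at hclue
  have hrest : ∑ p' ∈ (linePoints n m s c).erase p, f p' =
      ∑ p' ∈ (linePoints n m s c).erase p, g p' :=
    Finset.sum_congr rfl fun p' hp' =>
      hother p' (Finset.mem_of_mem_erase hp') (Finset.ne_of_mem_erase hp') f g hfg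
  linarith

theorem mem_line_neg_inv_iff {q : ℤ} (hq : q ≠ 0) (x y x₀ y₀ : ℤ) :
    (y : ℝ) = ((-(1 / (q : ℚ)) : ℚ) : ℝ) * x + (y₀ + x₀ / q) ↔ x + q * y = x₀ + q * y₀ := by
  have hq' : (q : ℝ) ≠ 0 := Int.cast_ne_zero.mpr hq
  rw [← Int.cast_inj (α := ℝ)]
  push_cast
  constructor <;> intro h
  · rw [h]; field_simp; ring
  · field_simp; linear_combination h

theorem mem_linePoints_neg_inv_iff {n m q : ℕ} (hq : q ≠ 0) (x₀ y₀ : ℤ) (p : ℤ × ℤ) :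
    p ∈ linePoints n m (some (-(1 / (q : ℚ)))) (y₀ + x₀ / q) ↔
      (1 ≤ p.1 ∧ p.1 ≤ n) ∧ (1 ≤ p.2 ∧ p.2 ≤ m) ∧ p.1 + q * p.2 = x₀ + q * y₀ := by
  have hline := mem_line_neg_inv_iff (q := q) (by exact_mod_cast hq) p.1 p.2 x₀ y₀
  simp only [Int.cast_natCast] at hline
  simp only [linePoints, Finset.mem_filter, Finset.mem_product, Finset.mem_Icc, hline, and_assoc]

theorem wSum_eq_zero (w : ℕ → ℕ) {a b : ℕ} (h : b < a) : wSum w a b = 0 := by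
  rw [wSum, Finset.Icc_eq_empty (by omega), Finset.sum_empty]

theorem wSum_eq_add (w : ℕ → ℕ) {a b : ℕ} (h : a ≤ b) : wSum w a b = w a + wSum w (a + 1) b := by
  rw [wSum, wSum, Finset.Icc_eq_cons_Ioc h, Finset.sum_cons, Finset.Icc_add_one_left_eq_Ioc]

theorem le_of_pos_wSum {w : ℕ → ℕ} {a b : ℕ} (h : 0 < wSum w a b) : a ≤ b := by
  by_contra hab
  exact h.ne' (wSum_eq_zero w (not_le.mp hab))

theorem wSum_le_add_wSum_add_one {w : ℕ → ℕ} {a b q : ℕ} (hw : a ≤ b → w a ≤ q) :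
    wSum w a b ≤ q + wSum w (a + 1) b := by
  rcases le_or_gt a b with hab | hab
  · rw [wSum_eq_add w hab]; exact Nat.add_le_add_right (hw hab) _
  · rw [wSum_eq_zero w hab]; exact Nat.zero_le _

theorem wSum_le_mul_add_wSum {w : ℕ → ℕ} {a b q : ℕ} (t : ℕ)
    (hw : ∀ i, a ≤ i → i < a + t → i ≤ b → w i ≤ q) :
    wSum w a b ≤ q * t + wSum w (a + t) b := by
  induction t with
  | zero => simp
  | succ t ih =>
    have hstep : wSum w (a + t) b ≤ q + wSum w (a + t + 1) b :=
      wSum_le_add_wSum_add_one (hw _ (by omega) (by omega))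
    have := ih fun i hai hit => hw i hai (by omega)
    rw [Nat.mul_succ, ← add_assoc a]
    omega

theorem mul_add_wSum_le_wSum {w : ℕ → ℕ} {a b q : ℕ} (t : ℕ) (ht : a + t ≤ b + 1)
    (hw : ∀ i, a ≤ i → i < a + t → q ≤ w i) :
    q * t + wSum w (a + t) b ≤ wSum w a b := by
  induction t with
  | zero => simp
  | succ t ih =>
    have hsplit := wSum_eq_add w (a := a + t) (b := b) (by omega)
    have hqw := hw (a + t) (by omega) (by omega)
    have := ih (by omega) fun i hai hit => hw i hai (by omega)
    rw [Nat.mul_succ, ← add_assoc a]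
    omega

theorem le_wSum_of_lt_of_eq {w : ℕ → ℕ} {m q j a b : ℕ} (hj : j ≤ m + 1)
    (hw : ∀ i, b ≤ i → i < j → q + 1 ≤ w i) (hbj : b < j)
    (h : a + q * b = wSum w j m + 1 + q * j) : a ≤ wSum w b m := by
  obtain ⟨t, rfl⟩ := Nat.exists_eq_add_of_lt hbj
  have hblock := mul_add_wSum_le_wSum (t + 1) (by omega) hw
  rw [← add_assoc] at hblock
  have h1 : (q + 1) * (t + 1) = q * t + q + t + 1 := by ring
  have h2 : q * (b + t + 1) = q * b + q * t + q := by ring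
  omega

theorem le_wSum_of_gt_of_eq {w : ℕ → ℕ} {m q j a b : ℕ}
    (hfirst : wSum w j m + 1 ≤ q + wSum w (j + 1) m)
    (hw : ∀ i, j < i → i ≤ m → w i ≤ q) (hjb : j < b)
    (h : a + q * b = wSum w j m + 1 + q * j) : a ≤ wSum w b m := by
  obtain ⟨t, rfl⟩ := Nat.exists_eq_add_of_lt hjb
  have hblock := wSum_le_mul_add_wSum (a := j + 1) (b := m) (q := q) t
    fun i hi _ him => hw i (by omega) him
  rw [add_right_comm] at hblock
  have h2 : q * (j + t + 1) = q * j + q * t + q := by ring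
  omega

theorem staircase_mem_of_eq {w : ℕ → ℕ} {m m₀ q j a b : ℕ} (hm₀ : m₀ ≤ m)
    (hmono : ∀ i : ℕ, 1 ≤ i → i < m₀ → w (i + 1) ≤ w i)
    (htail : ∀ i : ℕ, m₀ < i → i ≤ m → w i ≤ 1)
    (hj1 : 1 ≤ j) (hj2 : j ≤ m₀ + 1)
    (hwj : (if m₀ = m ∧ j = m₀ + 1 then 0 else w j) + 1 ≤ q)
    (hwj' : 2 ≤ j → q + 1 ≤ w (j - 1))
    (ha : 1 ≤ a) (hb : 1 ≤ b) (hbj : b ≠ j) (h : a + q * b = wSum w j m + 1 + q * j) :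
    b ≤ m ∧ a ≤ wSum w b m := by
  have hanti : AntitoneOn w (Set.Icc 1 m₀) :=
    antitoneOn_of_succ_le Set.ordConnected_Icc fun i _ hi hi' =>
      hmono i hi.1 (by simp only [Order.succ_eq_add_one, Set.mem_Icc] at hi'; omega)
  have hwj_lt : j ≤ m → w j + 1 ≤ q := fun hjm => by rwa [if_neg (by omega)] at hwj
  have hle : a ≤ wSum w b m := by
    rcases Nat.lt_or_gt_of_ne hbj with hlt | hgt
    · refine le_wSum_of_lt_of_eq (by omega) (fun i hbi hij => ?_) hlt h
      exact (hwj' (by omega)).trans (hanti ⟨by omega, by omega⟩ ⟨by omega, by omega⟩ (by omega))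
    · refine le_wSum_of_gt_of_eq ?_ (fun i hji him => ?_) hgt h
      · rcases le_or_gt j m with hjm | hjm
        · rw [wSum_eq_add w hjm]; have := hwj_lt hjm; omega
        · rw [wSum_eq_zero w hjm]; omega
      · rcases le_or_gt i m₀ with him₀ | him₀
        · have := hanti ⟨hj1, by omega⟩ ⟨by omega, him₀⟩ hji.le
          have := hwj_lt (by omega)
          omega
        · have := htail i him₀ him; omega
  exact ⟨le_of_pos_wSum (show 0 < wSum w b m by omega), hle⟩

theorem staircase_reduction_advanced_general (n q : ℕ) (hq : 0 < q)
    (T : Set Slope) (hT : some (-(1 / (q : ℚ))) ∈ T)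
    (m : ℕ) (w : ℕ → ℕ)
    (m₀ : ℕ) (hm₀2 : m₀ ≤ m)
    (hmono : ∀ i : ℕ, 1 ≤ i → i < m₀ → w (i + 1) ≤ w i)
    (htail : ∀ i : ℕ, m₀ < i → i ≤ m → w i ≤ 1)
    (hJ : ∀ x y : ℕ, 1 ≤ y → y ≤ m → 1 ≤ x → x ≤ wSum w y m →
      UniqSolv n n T ((x : ℤ), (y : ℤ)))
    (j : ℕ) (hj1 : 1 ≤ j) (hj2 : j ≤ m₀ + 1)
    (hptx : wSum w j m + 1 ≤ n) (hpty : j ≤ n)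
    (hwj : (if m₀ = m ∧ j = m₀ + 1 then 0 else w j) + 1 ≤ q)
    (hwj' : 2 ≤ j → q + 1 ≤ w (j - 1)) :
    UniqSolv n n T (((wSum w j m + 1 : ℕ) : ℤ), (j : ℤ)) := by
  refine UniqSolv.of_linePoints (c := ((j : ℤ) : ℝ) + (((wSum w j m + 1 : ℕ) : ℤ) : ℝ) / q)
    hT ?_ ?_
  · rw [mem_linePoints_neg_inv_iff hq.ne']
    exact ⟨⟨by omega, by omega⟩, ⟨by omega, by omega⟩, rfl⟩
  · rintro ⟨x, y⟩ hp hne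
    rw [mem_linePoints_neg_inv_iff hq.ne'] at hp
    simp only at hp
    obtain ⟨⟨hx1, -⟩, ⟨hy1, -⟩, hline⟩ := hp
    lift x to ℕ using (by omega)
    lift y to ℕ using (by omega)
    have hyj : y ≠ j := by
      intro hyj
      subst hyj
      exact hne (Prod.ext (by simp only; omega) rfl)
    obtain ⟨hym, hxw⟩ := staircase_mem_of_eq (a := x) hm₀2 hmono htail hj1 hj2 hwj hwj'
      (by omega) (by omega) hyj (by exact_mod_cast hline)
    exact hJ x y (by omega) hym (by omega) hxw

/-- the advanced staircase reduction corollary. Given a slope `−1/q ∈ T` and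
a sequence `ω = (w_1, …, w_m)` of non-negative integers with `m ≤ n`, `ω(1,m) ≤ n`, which is
monotone non-increasing on `w_1, …, w_{m₀}` and has entries in `{0,1}` afterwards, all of
whose staircase region `J_ω` is uniquely solvable, if `1 ≤ j ≤ m₀+1`, the point
`(ω(j,m)+1, j)` lies in `I_{n,n}`, `w_j + 1 ≤ q` (where `w_{m₀+1}` is taken to be `0` when
`m₀ = m`), and `q ≤ w_{j−1} − 1` when `j ≥ 2`, then the entry `(ω(j,m)+1, j)` is uniquely
solvable. -/
theorem staircase_reduction_advanced (n q : ℕ) (hn : 0 < n) (hq : 0 < q)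
    (T : Set Slope) (hT : some (-(1 / (q : ℚ))) ∈ T)
    (m : ℕ) (w : ℕ → ℕ) (hm : m ≤ n) (hsum : wSum w 1 m ≤ n)
    (m₀ : ℕ) (hm₀1 : 1 ≤ m₀) (hm₀2 : m₀ ≤ m)
    (hmono : ∀ i : ℕ, 1 ≤ i → i < m₀ → w (i + 1) ≤ w i)
    (htail : ∀ i : ℕ, m₀ < i → i ≤ m → w i ≤ 1)
    (hJ : ∀ x y : ℕ, 1 ≤ y → y ≤ m → 1 ≤ x → x ≤ wSum w y m →
      UniqSolv n n T ((x : ℤ), (y : ℤ)))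
    (j : ℕ) (hj1 : 1 ≤ j) (hj2 : j ≤ m₀ + 1)
    (hptx : wSum w j m + 1 ≤ n) (hpty : j ≤ n)
    (hwj : (if m₀ = m ∧ j = m₀ + 1 then 0 else w j) + 1 ≤ q)
    (hwj' : 2 ≤ j → q + 1 ≤ w (j - 1)) :
    UniqSolv n n T (((wSum w j m + 1 : ℕ) : ℤ), (j : ℤ)) :=
  staircase_reduction_advanced_general n q hq T hT m w m₀ hm₀2 hmono htail hJ j hj1 hj2 hptx hpty
    hwj hwj'
end
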